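/- The polynomials h_{n,k}(x) = ∑_{σ ∈ A_n, σ_{n-1} = k} x^{des(σ)} satisfy, for k ∈ [n], the recurrence h_{n+1,k}(x) = (n+1-k)·( ∑_{i=1}^{k-1} h_{n,i}(x) + x·∑_{i=k}^{n-1} h_{n,i}(x) ). -/

import Mathlib

open Polynomial

/-- Cartesian product of a list of multisets, as a multiset of lists. -/
def multisetProd : List (Multiset ℕ) → Multiset (List ℕ)
  | [] => {[]}
  | m :: ms => m.bind fun a => (multisetProd ms).map (a :: ·)

/-- The number of (weak) descents of a word `σ`: indices `i` with `σ_i ≥ σ_{i+1}`. -/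
def desW (σ : List ℕ) : ℕ :=
  ((Finset.range (σ.length - 1)).filter fun i => σ.getD (i + 1) 0 ≤ σ.getD i 0).card

/-- The `k`-th factor of `A_n`: the multiset with `k+1-i` copies of `i` for `1 ≤ i ≤ k`. -/
def factorA (k : ℕ) : Multiset ℕ :=
  (Finset.Icc 1 k).sum fun i => Multiset.replicate (k + 1 - i) i

/-- The multiset `A_n`, product of `factorA 1, …, factorA (n-1)`. -/
def An (n : ℕ) : Multiset (List ℕ) :=
  multisetProd ((List.range (n - 1)).map fun k => factorA (k + 1))

/-- `h_{n,k}(x) = ∑_{σ ∈ A_n, σ_{n-1} = k} x^{des σ}` (sum over elements of `A_n`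
whose last entry equals `k`). -/
noncomputable def hAnk (n k : ℕ) : Polynomial ℝ :=
  (((An n).filter fun σ => σ.getD (σ.length - 1) 0 = k).map
    fun σ => (X : Polynomial ℝ) ^ desW σ).sum

lemma multisetProd_append (ms : List (Multiset ℕ)) (m : Multiset ℕ) :
    multisetProd (ms ++ [m]) = (multisetProd ms).bind fun τ => m.map (τ ++ [·]) := by
  induction ms with
  | nil => simp [multisetProd]
  | cons m' ms ih =>
    have hc : (m' :: ms) ++ [m] = m' :: (ms ++ [m]) := rfl
    rw [hc, multisetProd, ih, multisetProd]
    simp only [Multiset.map_bind, Multiset.map_map, Multiset.bind_assoc, Multiset.bind_map]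
    rfl

lemma length_mem_multisetProd {ms : List (Multiset ℕ)} {σ : List ℕ}
    (h : σ ∈ multisetProd ms) : σ.length = ms.length := by
  induction ms generalizing σ with
  | nil => simp [multisetProd] at h; simp [h]
  | cons m ms ih =>
    simp only [multisetProd, Multiset.mem_bind, Multiset.mem_map] at h
    obtain ⟨a, _, τ, hτ, rfl⟩ := h
    simp [ih hτ]

lemma count_factorA {a k : ℕ} (h1 : 1 ≤ a) (h2 : a ≤ k) :
    (factorA k).count a = k + 1 - a := by
  rw [factorA, Multiset.count_sum']
  rw [Finset.sum_eq_single a]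
  · simp
  · intro b _ hb
    rw [Multiset.count_replicate, if_neg hb]
  · intro hb; simp [h1, h2] at hb

lemma mem_factorA {a k : ℕ} : a ∈ factorA k ↔ 1 ≤ a ∧ a ≤ k := by
  constructor
  · intro h
    rw [factorA, Multiset.mem_sum] at h
    obtain ⟨i, hi, h⟩ := h
    rw [Multiset.eq_of_mem_replicate h]
    simpa using hi
  · rintro ⟨h1, h2⟩
    rw [← Multiset.count_pos, count_factorA h1 h2]
    omega

lemma An_succ (n : ℕ) (hn : 1 ≤ n) :
    An (n + 1) = (An n).bind fun τ => (factorA n).map (τ ++ [·]) := by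
  obtain ⟨m, rfl⟩ : ∃ m, n = m + 1 := ⟨n - 1, by omega⟩
  rw [An, An]
  have h1 : m + 1 + 1 - 1 = m + 1 := by omega
  have h2 : m + 1 - 1 = m := by omega
  rw [h1, h2, List.range_succ, List.map_append, List.map_singleton, multisetProd_append]

lemma desW_append (τ : List ℕ) (hτ : τ ≠ []) (a : ℕ) :
    desW (τ ++ [a]) = desW τ + if a ≤ τ.getD (τ.length - 1) 0 then 1 else 0 := by
  obtain ⟨m, hm⟩ : ∃ m, τ.length = m + 1 :=
    ⟨τ.length - 1, by have := List.length_pos_iff.mpr hτ; omega⟩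
  have hlen : (τ ++ [a]).length = m + 2 := by simp [hm]
  rw [desW, desW, hlen, hm]
  simp only [Nat.add_sub_cancel]
  have h21 : m + 2 - 1 = m + 1 := rfl
  rw [h21, Finset.range_add_one, Finset.filter_insert]
  have hpt : ((τ ++ [a]).getD (m + 1) 0 ≤ (τ ++ [a]).getD m 0) ↔
      (a ≤ τ.getD m 0) := by
    rw [List.getD_append_right τ [a] 0 (m+1) (by omega),
      List.getD_append τ [a] 0 m (by omega)]
    simp [hm]
  have hfc : Finset.filter (fun i => (τ ++ [a]).getD (i + 1) 0 ≤ (τ ++ [a]).getD i 0)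
      (Finset.range m) = Finset.filter (fun i => τ.getD (i + 1) 0 ≤ τ.getD i 0)
      (Finset.range m) := by
    apply Finset.filter_congr
    intro i hi
    rw [Finset.mem_range] at hi
    rw [List.getD_append τ [a] 0 (i+1) (by omega), List.getD_append τ [a] 0 i (by omega)]
  by_cases h : a ≤ τ.getD m 0
  · rw [if_pos (hpt.mpr h), if_pos h, Finset.card_insert_of_notMem (by simp), hfc]
  · rw [if_neg (fun hc => h (hpt.mp hc)), if_neg h, hfc]
    omega

lemma sum_map_filter {α M : Type*} [AddCommMonoid M] (s : Multiset α) (p : α → Prop)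
    [DecidablePred p] (g : α → M) :
    ((s.filter p).map g).sum = (s.map fun a => if p a then g a else 0).sum := by
  induction s using Multiset.induction with
  | empty => simp
  | cons a s ih => by_cases h : p a <;> simp [Multiset.filter_cons, h, ih]

lemma sum_map_partition {α M : Type*} [AddCommMonoid M] (s : Multiset α) (key : α → ℕ)
    (I : Finset ℕ) (h : ∀ a ∈ s, key a ∈ I) (g : α → M) :
    (s.map g).sum = ∑ i ∈ I, ((s.filter fun a => key a = i).map g).sum := by
  induction s using Multiset.induction with
  | empty => simp
  | cons a s ih =>
    simp only [Multiset.map_cons, Multiset.sum_cons, Multiset.filter_cons]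
    rw [ih (fun b hb => h b (Multiset.mem_cons_of_mem hb))]
    have ha := h a (Multiset.mem_cons_self a s)
    simp only [Multiset.map_add, Multiset.sum_add, apply_ite (Multiset.map g),
      Multiset.map_singleton, Multiset.map_zero, apply_ite Multiset.sum,
      Multiset.sum_singleton, Multiset.sum_zero]
    rw [Finset.sum_add_distrib, Finset.sum_ite_eq, if_pos ha]

lemma sum_map_ite_eq {M : Type*} [AddCommMonoid M] (m : Multiset ℕ) (k : ℕ) (c : M) :
    (m.map fun a => if a = k then c else 0).sum = m.count k • c := by
  induction m using Multiset.induction with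
  | empty => simp
  | cons a s ih =>
    by_cases h : a = k
    · subst h; simp [ih, succ_nsmul, add_comm]
    · simp [h, ih, Multiset.count_cons_of_ne (Ne.symm h)]

lemma lastE_append (τ : List ℕ) (a : ℕ) :
    (τ ++ [a]).getD ((τ ++ [a]).length - 1) 0 = a := by
  have h : (τ ++ [a]).length - 1 = τ.length := by simp
  rw [h, List.getD_append_right τ [a] 0 τ.length le_rfl]
  simp

lemma length_mem_An {n : ℕ} {σ : List ℕ} (hσ : σ ∈ An n) : σ.length = n - 1 := by
  have := length_mem_multisetProd hσ
  simpa using this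

lemma key_mem_An {n : ℕ} (hn : 2 ≤ n) {σ : List ℕ} (hσ : σ ∈ An n) :
    σ.getD (σ.length - 1) 0 ∈ Finset.Icc 1 (n - 1) := by
  have h1 : n - 1 + 1 = n := by omega
  rw [← h1, An_succ (n - 1) (by omega)] at hσ
  rw [Multiset.mem_bind] at hσ
  obtain ⟨τ, hτ, hσ⟩ := hσ
  rw [Multiset.mem_map] at hσ
  obtain ⟨a, ha, rfl⟩ := hσ
  rw [lastE_append]
  rw [mem_factorA] at ha
  rw [Finset.mem_Icc]
  exact ha

/-- The recurrence
`h_{n+1,k}(x) = (n+1-k)·( ∑_{i=1}^{k-1} h_{n,i}(x) + x·∑_{i=k}^{n-1} h_{n,i}(x) )`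
for `k ∈ [n]`. -/
theorem hAnk_recurrence (n : ℕ) (hn : 2 ≤ n) (k : ℕ) (hk1 : 1 ≤ k) (hk2 : k ≤ n) :
    hAnk (n + 1) k =
      C ((n + 1 - k : ℕ) : ℝ) *
        (∑ i ∈ Finset.Icc 1 (k - 1), hAnk n i +
          X * ∑ i ∈ Finset.Icc k (n - 1), hAnk n i) := by
  have hc : (C ((n + 1 - k : ℕ) : ℝ)) = ((n + 1 - k : ℕ) : Polynomial ℝ) :=
    Polynomial.C_eq_natCast _
  rw [hAnk, sum_map_filter, An_succ n (by omega), Multiset.map_bind, Multiset.sum_bind]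
  simp only [Multiset.map_map]
  have hinner : Multiset.map (fun τ =>
      (Multiset.map ((fun σ => if σ.getD (σ.length - 1) 0 = k then
          (X : Polynomial ℝ) ^ desW σ else 0) ∘ fun x => τ ++ [x]) (factorA n)).sum) (An n) =
      Multiset.map (fun τ => ((n + 1 - k : ℕ) : Polynomial ℝ) *
        ((X : Polynomial ℝ) ^ desW τ *
          if k ≤ τ.getD (τ.length - 1) 0 then (X : Polynomial ℝ) else 1)) (An n) := by
    apply Multiset.map_congr rfl
    intro τ hτ
    have hlen : τ.length = n - 1 := length_mem_An hτ
    have hne : τ ≠ [] := by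
      intro h; rw [h] at hlen; simp at hlen; omega
    have hmc : Multiset.map
        ((fun σ => if σ.getD (σ.length - 1) 0 = k then (X : Polynomial ℝ) ^ desW σ else 0)
          ∘ fun x => τ ++ [x]) (factorA n) =
        Multiset.map (fun a => if a = k then
          (X : Polynomial ℝ) ^ desW τ *
            (if k ≤ τ.getD (τ.length - 1) 0 then (X : Polynomial ℝ) else 1) else 0)
          (factorA n) := by
      apply Multiset.map_congr rfl
      intro a _
      simp only [Function.comp_apply, lastE_append, desW_append τ hne a]
      by_cases hak : a = k
      · subst hak
        rw [if_pos rfl, if_pos rfl]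
        by_cases hd : a ≤ τ.getD (τ.length - 1) 0
        · rw [if_pos hd, if_pos hd, pow_succ]
        · rw [if_neg hd, if_neg hd, add_zero, mul_one]
      · rw [if_neg hak, if_neg hak]
    rw [hmc, sum_map_ite_eq, count_factorA hk1 (by omega), nsmul_eq_mul]
  rw [hinner]
  rw [sum_map_partition (An n) (fun σ => σ.getD (σ.length - 1) 0) (Finset.Icc 1 (n - 1))
    (fun σ hσ => key_mem_An hn hσ)]
  have hterm : ∀ i ∈ Finset.Icc 1 (n - 1),
      ((Multiset.filter (fun σ => σ.getD (σ.length - 1) 0 = i) (An n)).map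
        fun τ => ((n + 1 - k : ℕ) : Polynomial ℝ) *
          ((X : Polynomial ℝ) ^ desW τ *
            if k ≤ τ.getD (τ.length - 1) 0 then (X : Polynomial ℝ) else 1)).sum =
      ((n + 1 - k : ℕ) : Polynomial ℝ) *
        (hAnk n i * if k ≤ i then (X : Polynomial ℝ) else 1) := by
    intro i _
    have hmc2 : ((Multiset.filter (fun σ => σ.getD (σ.length - 1) 0 = i) (An n)).map
        fun τ => ((n + 1 - k : ℕ) : Polynomial ℝ) *
          ((X : Polynomial ℝ) ^ desW τ *
            if k ≤ τ.getD (τ.length - 1) 0 then (X : Polynomial ℝ) else 1)) =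
        ((Multiset.filter (fun σ => σ.getD (σ.length - 1) 0 = i) (An n)).map
        fun τ => ((n + 1 - k : ℕ) : Polynomial ℝ) *
          ((X : Polynomial ℝ) ^ desW τ *
            if k ≤ i then (X : Polynomial ℝ) else 1)) := by
      apply Multiset.map_congr rfl
      intro τ hτ
      rw [(Multiset.mem_filter.mp hτ).2]
    rw [hmc2, Multiset.sum_map_mul_left]
    congr 1
    rw [Multiset.sum_map_mul_right, hAnk]
  rw [Finset.sum_congr rfl hterm, ← Finset.mul_sum, hc]
  congr 1
  have hsplit : Finset.Icc 1 (n - 1) = Finset.Icc 1 (k - 1) ∪ Finset.Icc k (n - 1) := by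
    ext i
    simp only [Finset.mem_Icc, Finset.mem_union]
    omega
  have hdisj : Disjoint (Finset.Icc 1 (k - 1)) (Finset.Icc k (n - 1)) := by
    rw [Finset.disjoint_left]
    intro i hi hi'
    simp only [Finset.mem_Icc] at hi hi'
    omega
  rw [hsplit, Finset.sum_union hdisj]
  congr 1
  · apply Finset.sum_congr rfl
    intro i hi
    rw [Finset.mem_Icc] at hi
    rw [if_neg (by omega), mul_one]
  · rw [Finset.mul_sum]
    apply Finset.sum_congr rfl
    intro i hi
    rw [Finset.mem_Icc] at hi
    rw [if_pos (by omega), mul_comm]
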